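/- arXiv:2509.20185 — 6 statements merged into one kernel-verified Lean document; each statement's English description precedes it below -/
import Mathlib

section
/- Let G be a compact Hausdorff abelian topological group. A continuous character of G (i.e., an element of the Pontryagin dual of G) has finite order in the Pontryagin dual group if and only if it vanishes on the connected component of the identity of G. Consequently, the torsion subgroup of the Pontryagin dual of G is exactly the image of the injective homomorphism from the Pontryagin dual of the component group G/G₀ to the Pontryagin dual of G given by precomposition with the quotient map G → G/G₀. -/
/-!
The image of `G₀` under a character `χ` is connected. If `n • χ = 0` it lies in the finite group
of `n`-torsion points of the circle, so it is `{0}`. Conversely, if `χ` kills `G₀` then the open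
set `χ⁻¹(B(0, 1/4))` contains `G₀`; by compactness it contains a clopen neighbourhood of `0` and
hence an open subgroup `H`. Since the circle has no nontrivial subgroup inside `B(0, 1/4)`,
`χ` kills `H`, so its kernel is open, hence of finite index `n`, and `n • χ = 0`.
-/

open Set

namespace AddCircle

theorem exists_coe_eq_abs_eq_norm {p : ℝ} (y : AddCircle p) :
    ∃ r : ℝ, (r : AddCircle p) = y ∧ |r| = ‖y‖ := by
  obtain ⟨x, rfl⟩ := QuotientAddGroup.mk_surjective y
  refine ⟨x - round (p⁻¹ * x) * p, ?_, (norm_eq p).symm⟩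
  simp [coe_period]

theorem eq_zero_of_forall_norm_nsmul_lt {p : ℝ} (hp : p ≠ 0) {y : AddCircle p}
    (h : ∀ k : ℕ, ‖k • y‖ < |p| / 4) : y = 0 := by
  obtain ⟨r, rfl, hr⟩ := exists_coe_eq_abs_eq_norm y
  have hr4 : |r| < |p| / 4 := by simpa [hr] using h 1
  -- `|k r| < |p| / 4` forces `|(k + 1) r| ≤ |p| / 2`, where the norm of the circle is `|·|`.
  have hbound : ∀ k : ℕ, |k * r| < |p| / 4 := by
    intro k
    induction k with
    | zero => simpa using abs_pos.2 hp
    | succ k ih =>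
      have hhalf : |(k + 1 : ℕ) * r| ≤ |p| / 2 := by
        push_cast
        calc |(k + 1 : ℝ) * r| = |k * r + r| := by ring_nf
          _ ≤ |k * r| + |r| := abs_add_le _ _
          _ ≤ |p| / 2 := by linarith
      rw [← (norm_coe_eq_abs_iff p hp).2 hhalf, ← nsmul_eq_mul, coe_nsmul]
      exact h (k + 1)
  obtain rfl : r = 0 := by
    by_contra hr0
    obtain ⟨n, hn⟩ := Archimedean.arch (|p| / 4) (abs_pos.2 hr0)
    have := hbound n
    rw [abs_mul, Nat.abs_cast, ← nsmul_eq_mul] at this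
    linarith
  simp

end AddCircle

theorem exists_isClopen_subset_of_connectedComponent_subset {X : Type*} [TopologicalSpace X]
    [T2Space X] [CompactSpace X] {x : X} {U : Set X} (hU : IsOpen U)
    (h : connectedComponent x ⊆ U) : ∃ W : Set X, IsClopen W ∧ x ∈ W ∧ W ⊆ U := by
  have hdir : Directed (· ⊇ ·) fun s : { s : Set X // IsClopen s ∧ x ∈ s } => s.val := by
    rintro ⟨s, hs, hxs⟩ ⟨t, ht, hxt⟩
    exact ⟨⟨s ∩ t, hs.inter ht, hxs, hxt⟩, inter_subset_left, inter_subset_right⟩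
  have : Nonempty { s : Set X // IsClopen s ∧ x ∈ s } := ⟨⟨univ, isClopen_univ, mem_univ x⟩⟩
  obtain ⟨⟨W, hW, hxW⟩, hWU⟩ := exists_subset_nhds_of_compactSpace hdir (fun s => s.2.1.1)
    fun y hy => hU.mem_nhds (h ((connectedComponent_eq_iInter_isClopen x).symm ▸ hy))
  exact ⟨W, hW, hxW, hWU⟩

section CompactGroup

variable {G : Type*} [AddGroup G] [TopologicalSpace G] [IsTopologicalAddGroup G] [CompactSpace G]

theorem exists_openAddSubgroup_subset_of_connectedComponent_subset [T2Space G] {U : Set G}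
    (hU : IsOpen U) (h : connectedComponent (0 : G) ⊆ U) :
    ∃ H : OpenAddSubgroup G, (H : Set G) ⊆ U := by
  obtain ⟨W, hW, h0W, hWU⟩ := exists_isClopen_subset_of_connectedComponent_subset hU h
  obtain ⟨H, hHW⟩ := IsTopologicalAddGroup.exist_openAddSubgroup_sub_clopen_nhds_of_zero hW h0W
  exact ⟨H, hHW.trans hWU⟩

theorem AddMonoidHom.exists_nsmul_eq_zero_of_isOpen_ker {A : Type*} [AddZeroClass A] (f : G →+ A)
    (hf : IsOpen (f.ker : Set G)) : ∃ n : ℕ, 0 < n ∧ ∀ g, f (n • g) = 0 := by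
  have := AddSubgroup.quotient_finite_of_isOpen f.ker hf
  exact ⟨f.ker.index, Nat.pos_of_ne_zero AddSubgroup.index_ne_zero_of_finite,
    fun g => f.ker.nsmul_index_mem g⟩

end CompactGroup

namespace ContinuousAddMonoidHom

theorem exists_eq_comp_mk_iff {G E : Type*} [AddGroup G] [TopologicalSpace G] [AddMonoid E]
    [TopologicalSpace E] (N : AddSubgroup G) [N.Normal] (χ : ContinuousAddMonoidHom G E) :
    (∃ ψ : ContinuousAddMonoidHom (G ⧸ N) E, ∀ x : G, χ x = ψ x) ↔ ∀ x ∈ N, χ x = 0 := by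
  constructor
  · rintro ⟨ψ, hψ⟩ x hx
    rw [hψ, (QuotientAddGroup.eq_zero_iff x).2 hx, map_zero]
  · intro h
    exact ⟨⟨QuotientAddGroup.lift N χ.toAddMonoidHom h,
      (QuotientAddGroup.isQuotientMap_mk N).continuous_iff.2 χ.continuous⟩, fun _ => rfl⟩

variable {G : Type*} {p : ℝ}

theorem eq_zero_of_isOfFinAddOrder_of_mem_connectedComponent [AddMonoid G] [TopologicalSpace G]
    {χ : ContinuousAddMonoidHom G (AddCircle p)} (hχ : IsOfFinAddOrder χ) {x : G}
    (hx : x ∈ connectedComponent 0) : χ x = 0 := by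
  obtain ⟨n, hn, hnχ⟩ := isOfFinAddOrder_iff_nsmul_eq_zero.1 hχ
  have hmaps : MapsTo χ (connectedComponent 0) {u | n • u = 0} := fun g _ => by
    simpa using DFunLike.congr_fun hnχ g
  simpa using isPreconnected_connectedComponent.constant_of_mapsTo
    (AddCircle.finite_torsion p hn).isDiscrete χ.continuous.continuousOn hmaps hx
    mem_connectedComponent

theorem isOfFinAddOrder_of_forall_connectedComponent_eq_zero [AddGroup G] [TopologicalSpace G]
    [IsTopologicalAddGroup G] [CompactSpace G] [T2Space G] (hp : p ≠ 0)
    {χ : ContinuousAddMonoidHom G (AddCircle p)} (h : ∀ x ∈ connectedComponent 0, χ x = 0) :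
    IsOfFinAddOrder χ := by
  obtain ⟨H, hHU⟩ := exists_openAddSubgroup_subset_of_connectedComponent_subset
    (U := χ ⁻¹' Metric.ball 0 (|p| / 4)) (Metric.isOpen_ball.preimage χ.continuous) fun x hx => by
      simpa [h x hx] using abs_pos.2 hp
  have hHker : H.toAddSubgroup ≤ χ.toAddMonoidHom.ker := fun g hg =>
    AddCircle.eq_zero_of_forall_norm_nsmul_lt hp fun k => by
      simpa [← map_nsmul] using hHU (H.nsmul_mem hg k)
  obtain ⟨n, hn, hnχ⟩ := χ.toAddMonoidHom.exists_nsmul_eq_zero_of_isOpen_ker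
    (AddSubgroup.isOpen_mono hHker H.isOpen)
  exact isOfFinAddOrder_iff_nsmul_eq_zero.2 ⟨n, hn, ext fun g => by simpa using hnχ g⟩

theorem isOfFinAddOrder_iff_forall_connectedComponent_eq_zero [AddGroup G] [TopologicalSpace G]
    [IsTopologicalAddGroup G] [CompactSpace G] [T2Space G] (hp : p ≠ 0)
    (χ : ContinuousAddMonoidHom G (AddCircle p)) :
    IsOfFinAddOrder χ ↔ ∀ x ∈ connectedComponent 0, χ x = 0 :=
  ⟨fun hχ _ => eq_zero_of_isOfFinAddOrder_of_mem_connectedComponent hχ,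
    isOfFinAddOrder_of_forall_connectedComponent_eq_zero hp⟩

end ContinuousAddMonoidHom

/-- For a compact Hausdorff abelian topological group `G`, a continuous character
`χ : G → ℝ/ℤ` is a torsion element of the Pontryagin dual iff it vanishes on the
connected component of the identity `G₀`. Consequently, precomposition with the quotient
map `G → G/G₀` is an injective homomorphism from the dual of `G/G₀` to the dual of `G`
whose image is exactly the torsion subgroup of the dual of `G`. -/
theorem torsion_character_iff_vanishes_on_identity_component
    {G : Type*} [AddCommGroup G] [TopologicalSpace G] [IsTopologicalAddGroup G]
    [CompactSpace G] [T2Space G] :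
    (∀ χ : ContinuousAddMonoidHom G (AddCircle (1 : ℝ)),
        (∃ n : ℕ, 0 < n ∧ n • χ = 0) ↔ ∀ x ∈ connectedComponent (0 : G), χ x = 0) ∧
    (∀ ψ₁ ψ₂ : ContinuousAddMonoidHom
          (G ⧸ AddSubgroup.connectedComponentOfZero G) (AddCircle (1 : ℝ)),
        (∀ x : G, ψ₁ (QuotientAddGroup.mk x) = ψ₂ (QuotientAddGroup.mk x)) → ψ₁ = ψ₂) ∧
    (∀ χ : ContinuousAddMonoidHom G (AddCircle (1 : ℝ)),
        (∃ n : ℕ, 0 < n ∧ n • χ = 0) ↔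
          ∃ ψ : ContinuousAddMonoidHom
              (G ⧸ AddSubgroup.connectedComponentOfZero G) (AddCircle (1 : ℝ)),
            ∀ x : G, χ x = ψ (QuotientAddGroup.mk x)) := by
  have torsion_iff : ∀ χ : ContinuousAddMonoidHom G (AddCircle (1 : ℝ)),
      (∃ n : ℕ, 0 < n ∧ n • χ = 0) ↔ ∀ x ∈ connectedComponent (0 : G), χ x = 0 := fun χ =>
    isOfFinAddOrder_iff_nsmul_eq_zero.symm.trans
      (χ.isOfFinAddOrder_iff_forall_connectedComponent_eq_zero one_ne_zero)
  refine ⟨torsion_iff, fun ψ₁ ψ₂ h => ?_, fun χ => ?_⟩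
  · exact ContinuousAddMonoidHom.ext (QuotientAddGroup.mk_surjective.forall.2 h)
  · exact (torsion_iff χ).trans
      (χ.exists_eq_comp_mk_iff (AddSubgroup.connectedComponentOfZero G)).symm
end

section
/- Every continuous character of a compact Hausdorff totally disconnected abelian topological group (i.e., every continuous homomorphism from such a group to the circle group ℝ/ℤ) has finite image, and hence is a torsion element of the Pontryagin dual group. -/
/-!
A continuous character `χ` pulls the ball of radius `1/4` around `0` in the circle back to a
neighbourhood of `0`, which in a compact totally disconnected group contains an open subgroup
`H`. The image `χ(H)` is a subgroup of the circle inside that ball, hence trivial, because the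
multiples of a nonzero point of norm `r < 1/4` grow in steps of `r` until they leave the ball.
So `ker χ` is open, of finite index by compactness, and `χ` has finite range, whose order kills `χ`.
-/

namespace AddCircle

theorem exists_le_norm_nsmul {p : ℝ} (hp : 0 < p) {x : AddCircle p} (hx : x ≠ 0) :
    ∃ n : ℕ, p / 4 ≤ ‖n • x‖ := by
  obtain hlarge | hsmall := le_or_gt (p / 4) ‖x‖
  · exact ⟨1, by simpa using hlarge⟩
  have := Fact.mk hp
  obtain ⟨t, ht, rfl⟩ : x ∈ ((↑) : ℝ → AddCircle p) '' Set.Ico (-(p / 2)) (-(p / 2) + p) := by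
    rw [coe_image_Ico_eq]; trivial
  have hp_half : |p| / 2 = p / 2 := by rw [abs_of_pos hp]
  have hnorm_coe : ∀ s : ℝ, |s| ≤ p / 2 → ‖(s : AddCircle p)‖ = |s| := fun s hs =>
    (norm_coe_eq_abs_iff p hp.ne').2 (hp_half ▸ hs)
  have ht_norm : ‖(t : AddCircle p)‖ = |t| := hnorm_coe t (abs_le.2 ⟨ht.1, by linarith [ht.2]⟩)
  set r := |t|
  have hr : 0 < r := ht_norm ▸ norm_pos_iff.2 hx
  rw [ht_norm] at hsmall
  -- the first multiple of `r` beyond `p / 4` overshoots it by at most `r < p / 4`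
  set n := ⌊p / (4 * r)⌋₊ + 1
  have hn_lower : p / 4 < n * r := by
    have := Nat.lt_floor_add_one (p / (4 * r))
    rw [div_lt_iff₀ (by positivity)] at this
    push_cast [n]; linarith
  have hn_upper : n * r ≤ p / 4 + r := by
    have := Nat.floor_le (div_nonneg hp.le (by positivity : (0 : ℝ) ≤ 4 * r))
    rw [le_div_iff₀ (by positivity)] at this
    push_cast [n]; linarith
  have habs : |(n : ℝ) * t| = n * r := by rw [abs_mul, Nat.abs_cast]
  refine ⟨n, ?_⟩
  rw [← coe_nsmul, nsmul_eq_mul, hnorm_coe _ (by linarith), habs]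
  exact hn_lower.le

theorem eq_bot_of_forall_norm_lt {p : ℝ} (hp : 0 < p) {S : AddSubgroup (AddCircle p)}
    (hS : ∀ x ∈ S, ‖x‖ < p / 4) : S = ⊥ := by
  refine (AddSubgroup.eq_bot_iff_forall S).2 fun x hx => ?_
  by_contra hx0
  obtain ⟨n, hn⟩ := exists_le_norm_nsmul hp hx0
  exact (hS _ (S.nsmul_mem hx n)).not_ge hn

end AddCircle

theorem ContinuousAddMonoidHom.isOpen_ker_of_totallyDisconnectedSpace {G : Type*} [AddGroup G]
    [TopologicalSpace G] [IsTopologicalAddGroup G] [CompactSpace G] [TotallyDisconnectedSpace G]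
    {p : ℝ} (hp : 0 < p) (χ : G →ₜ+ AddCircle p) :
    IsOpen (χ.toAddMonoidHom.ker : Set G) := by
  have h0 : (0 : G) ∈ χ ⁻¹' Metric.ball 0 (p / 4) := by simpa using hp
  obtain ⟨H, hH⟩ := ProfiniteGrp.exist_openNormalAddSubgroup_sub_open_nhds_of_zero
    (Metric.isOpen_ball.preimage χ.continuous) h0
  have hmap : H.toAddSubgroup.map χ.toAddMonoidHom = ⊥ := by
    refine AddCircle.eq_bot_of_forall_norm_lt hp ?_
    rintro _ ⟨g, hg, rfl⟩
    simpa using hH hg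
  exact AddSubgroup.isOpen_mono ((AddSubgroup.map_eq_bot_iff _).1 hmap) H.toOpenAddSubgroup.isOpen

theorem AddMonoidHom.finite_range_of_isOpen_ker {G A : Type*} [AddGroup G] [TopologicalSpace G]
    [SeparatelyContinuousAdd G] [CompactSpace G] [AddGroup A] (f : G →+ A)
    (hf : IsOpen (f.ker : Set G)) : Finite f.range :=
  have := f.ker.quotient_finite_of_isOpen hf
  .of_equiv _ (QuotientAddGroup.quotientKerEquivRange f).toEquiv

theorem continuous_character_of_profinite_is_torsion_general
    {G : Type*} [AddCommGroup G] [TopologicalSpace G] [IsTopologicalAddGroup G]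
    [CompactSpace G] [TotallyDisconnectedSpace G]
    (χ : ContinuousAddMonoidHom G (AddCircle (1 : ℝ))) :
    (Set.range χ).Finite ∧ ∃ n : ℕ, 0 < n ∧ n • χ = 0 := by
  set R := χ.toAddMonoidHom.range
  have : Finite R := χ.toAddMonoidHom.finite_range_of_isOpen_ker
    (χ.isOpen_ker_of_totallyDisconnectedSpace one_pos)
  refine ⟨?_, Nat.card R, Nat.card_pos, ?_⟩
  · rw [show Set.range χ = R from χ.toAddMonoidHom.coe_range.symm]
    exact Set.toFinite _
  · ext g
    rw [ContinuousAddMonoidHom.nsmul_apply]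
    exact congrArg Subtype.val (card_nsmul_eq_zero' (x := (⟨χ g, g, rfl⟩ : R)))

/-- Every continuous character of a compact Hausdorff totally disconnected abelian
topological group (i.e. every continuous homomorphism to the circle group `ℝ/ℤ`)
has finite image, and hence is a torsion element of the Pontryagin dual group. -/
theorem continuous_character_of_profinite_is_torsion
    {G : Type*} [AddCommGroup G] [TopologicalSpace G] [IsTopologicalAddGroup G]
    [CompactSpace G] [T2Space G] [TotallyDisconnectedSpace G]
    (χ : ContinuousAddMonoidHom G (AddCircle (1 : ℝ))) :
    (Set.range χ).Finite ∧ ∃ n : ℕ, 0 < n ∧ n • χ = 0 :=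
  continuous_character_of_profinite_is_torsion_general χ
end

section
/- Let A be a finite abelian group equipped with the discrete topology, and let T = ℝ/ℤ be the circle group. Then the group of topological automorphisms of the compact abelian group C = A × T (continuous group automorphisms with continuous inverse) is finite of cardinality 2 · |Aut(A)| · |A|. -/
/-!
A continuous automorphism `f` of `A × 𝕋` with `A` discrete preserves the identity component
`0 × 𝕋`, so it has the triangular form `(a, t) ↦ (α a, φ a + h t)` with `α ∈ Aut A`,
`φ ∈ Hom(A, 𝕋)` and `h` a topological automorphism of `𝕋`; conversely every such triple defines
one. Now `Hom(A, 𝕋)` is the character group of `A`, of order `|A|`, and a continuous endomorphism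
of `𝕋` lifts through the universal cover `ℝ → 𝕋` to a continuous additive map `ℝ → ℝ`, i.e. a
multiplication by a real number, which must be an integer `n`; invertibility forces `n = ±1`.
-/

namespace ContinuousAddEquiv

def neg (G : Type*) [AddCommGroup G] [TopologicalSpace G] [IsTopologicalAddGroup G] : G ≃ₜ+ G where
  toAddEquiv := AddEquiv.neg G
  continuous_toFun := continuous_neg
  continuous_invFun := continuous_neg

@[simp]
theorem neg_apply {G : Type*} [AddCommGroup G] [TopologicalSpace G] [IsTopologicalAddGroup G]
    (x : G) : neg G x = -x := rfl

def equivSubtypeAddEquiv (X Y : Type*) [Add X] [Add Y] [TopologicalSpace X] [TopologicalSpace Y] :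
    (X ≃ₜ+ Y) ≃ {f : X ≃+ Y // Continuous f ∧ Continuous f.symm} where
  toFun e := ⟨e.toAddEquiv, e.continuous_toFun, e.continuous_invFun⟩
  invFun f := ⟨f.1, f.2.1, f.2.2⟩

end ContinuousAddEquiv

namespace AddCircle

section

variable {p : ℝ} [Fact (0 < p)]

theorem exists_eq_zsmul_of_continuous (g : AddCircle p →+ AddCircle p) (hg : Continuous g) :
    ∃ n : ℤ, ∀ x, g x = n • x := by
  let f : C(ℝ, AddCircle p) := ⟨g ∘ (↑), hg.comp continuous_quotient_mk'⟩
  obtain ⟨F, ⟨-, hF⟩, hF_unique⟩ :=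
    (isCoveringMap_coe p).existsUnique_continuousMap_lifts f 0 0 (by simp [f])
  have hFg : ∀ x : ℝ, ((F x : ℝ) : AddCircle p) = g x := fun x => congrFun hF x
  -- `y ↦ F (x + y) - F x` is another lift of `f` vanishing at `0`, hence equals `F`.
  have hF_add : ∀ x y, F (x + y) = F x + F y := by
    intro x y
    let F' : C(ℝ, ℝ) := ⟨fun y => F (x + y) - F x, by fun_prop⟩
    have hF' : F' = F := hF_unique F' ⟨by simp [F'], funext fun y => by simp [F', hFg, f]⟩
    have hy := congrArg (· y) hF'
    simp only [F', ContinuousMap.coe_mk] at hy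
    linarith
  have hF_mul : ∀ y, F y = y * F 1 := fun y => by
    simpa using map_real_smul (AddMonoidHom.mk' F hF_add) F.continuous y 1
  obtain ⟨n, hn⟩ := (coe_eq_zero_iff _).mp ((hFg p).trans (by rw [coe_period, map_zero]))
  have hF_one : F 1 = n := by
    rw [hF_mul, zsmul_eq_mul] at hn
    exact mul_left_cancel₀ (Fact.out : 0 < p).ne' (by linarith)
  refine ⟨n, fun x => ?_⟩
  induction x using QuotientAddGroup.induction_on with | H y => ?_
  rw [← hFg, hF_mul, hF_one, ← coe_zsmul, zsmul_eq_mul, mul_comm]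

theorem eq_zero_of_forall_zsmul_eq_zero {j : ℤ} (h : ∀ x : AddCircle p, j • x = 0) : j = 0 := by
  have hord := addOrderOf_period_div (p := p) (n := j.natAbs + 1) (by omega)
  have hdvd : j.natAbs + 1 ∣ j.natAbs := by
    rw [← Int.natCast_dvd, ← hord]
    exact addOrderOf_dvd_iff_zsmul_eq_zero.mpr (h _)
  exact Int.natAbs_eq_zero.mp (Nat.eq_zero_of_dvd_of_lt hdvd j.natAbs.lt_succ_self)

theorem continuousAddEquiv_eq_refl_or_neg (e : AddCircle p ≃ₜ+ AddCircle p) :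
    e = .refl _ ∨ e = .neg _ := by
  obtain ⟨n, hn⟩ := exists_eq_zsmul_of_continuous (e : AddCircle p →+ AddCircle p) e.continuous
  obtain ⟨m, hm⟩ :=
    exists_eq_zsmul_of_continuous (e.symm : AddCircle p →+ AddCircle p) e.symm.continuous
  simp only [AddMonoidHom.coe_coe] at hn hm
  have hnm : n * m = 1 := by
    rw [← sub_eq_zero]
    refine eq_zero_of_forall_zsmul_eq_zero (p := p) fun x => ?_
    have hx := e.apply_symm_apply x
    rw [hm, hn, smul_smul] at hx
    rw [sub_smul, hx, one_smul, sub_self]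
  rcases Int.eq_one_or_neg_one_of_mul_eq_one hnm with rfl | rfl
  · exact .inl (ContinuousAddEquiv.ext fun x => by simpa using hn x)
  · exact .inr (ContinuousAddEquiv.ext fun x => by simpa using hn x)

theorem card_continuousAddEquiv : Nat.card (AddCircle p ≃ₜ+ AddCircle p) = 2 := by
  refine Nat.card_eq_two_iff.mpr ⟨.refl _, .neg _, fun h => ?_, ?_⟩
  · have h2 : (2 : ℤ) = 0 := eq_zero_of_forall_zsmul_eq_zero fun x => by
      have hx : x = -x := congrArg (· x) (congrArg DFunLike.coe h)
      rw [two_zsmul]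
      nth_rewrite 1 [hx]
      exact neg_add_cancel x
    norm_num at h2
  · exact Set.eq_univ_of_forall continuousAddEquiv_eq_refl_or_neg

end

noncomputable def addEquivAdditiveCircle {p : ℝ} (hp : p ≠ 0) : AddCircle p ≃+ Additive Circle :=
  AddEquiv.mk' ((homeomorphCircle hp).toEquiv.trans Additive.ofMul) fun x y => by
    simp [homeomorphCircle_apply, toCircle_add]

theorem card_addMonoidHom (A : Type*) [AddCommGroup A] [Finite A] {p : ℝ} (hp : p ≠ 0) :
    Nat.card (A →+ AddCircle p) = Nat.card A := by
  have : Fintype A := Fintype.ofFinite A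
  rw [Nat.card_congr ((addEquivAdditiveCircle hp).addMonoidHomCongrRight.toEquiv.trans
      (AddChar.toAddMonoidHomEquiv.symm.trans AddChar.circleEquivComplex.toEquiv)),
    Nat.card_eq_fintype_card, Nat.card_eq_fintype_card, AddChar.card_eq]

end AddCircle

namespace ContinuousAddEquiv

variable {A B : Type*} [AddCommGroup A] [TopologicalSpace A] [AddCommGroup B] [TopologicalSpace B]

section

variable [DiscreteTopology A] [IsTopologicalAddGroup B]

def prodTriangular (α : A ≃+ A) (φ : A →+ B) (h : B ≃ₜ+ B) : A × B ≃ₜ+ A × B where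
  toFun x := (α x.1, φ x.1 + h x.2)
  invFun x := (α.symm x.1, h.symm (x.2 - φ (α.symm x.1)))
  left_inv x := by simp
  right_inv x := by simp
  map_add' x y := by
    ext
    · simp
    · simp only [Prod.fst_add, Prod.snd_add, map_add]
      abel
  continuous_toFun := by fun_prop
  continuous_invFun := by fun_prop

@[simp]
theorem prodTriangular_apply (α : A ≃+ A) (φ : A →+ B) (h : B ≃ₜ+ B) (x : A × B) :
    prodTriangular α φ h x = (α x.1, φ x.1 + h x.2) := rfl

end

section

variable (f : A × B ≃ₜ+ A × B)

def prodMixedHom : A →+ B :=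
  (AddMonoidHom.snd A B).comp ((f : A × B →+ A × B).comp (AddMonoidHom.inl A B))

@[simp]
theorem prodMixedHom_apply (a : A) : prodMixedHom f a = (f (a, 0)).2 := rfl

variable [DiscreteTopology A] [PreconnectedSpace B]

theorem fst_apply_zero_mk (b : B) : (f (0, b)).1 = 0 := by
  have hc : Continuous fun b : B => (f (0, b)).1 := by fun_prop
  rw [PreconnectedSpace.constant ‹_› hc (y := 0), Prod.mk_zero_zero, map_zero, Prod.fst_zero]

theorem fst_apply (x : A × B) : (f x).1 = (f (x.1, 0)).1 := by
  conv_lhs => rw [← Prod.fst_add_snd x, map_add]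
  simp [fst_apply_zero_mk]

theorem mk_zero_snd_apply_zero_mk (b : B) : ((0 : A), (f (0, b)).2) = f (0, b) :=
  Prod.ext (fst_apply_zero_mk f b).symm rfl

def prodFstAut : A ≃+ A :=
  AddMonoidHom.toAddEquiv
    ((AddMonoidHom.fst A B).comp ((f : A × B →+ A × B).comp (AddMonoidHom.inl A B)))
    ((AddMonoidHom.fst A B).comp ((f.symm : A × B →+ A × B).comp (AddMonoidHom.inl A B)))
    (by ext a; simp [← fst_apply f.symm (f (a, 0))])
    (by ext a; simp [← fst_apply f (f.symm (a, 0))])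

@[simp]
theorem prodFstAut_apply (a : A) : prodFstAut f a = (f (a, 0)).1 := rfl

def prodSndAut : B ≃ₜ+ B where
  toAddEquiv := AddMonoidHom.toAddEquiv
    ((AddMonoidHom.snd A B).comp ((f : A × B →+ A × B).comp (AddMonoidHom.inr A B)))
    ((AddMonoidHom.snd A B).comp ((f.symm : A × B →+ A × B).comp (AddMonoidHom.inr A B)))
    (by ext b; simp [mk_zero_snd_apply_zero_mk])
    (by ext b; simp [mk_zero_snd_apply_zero_mk f.symm])
  continuous_toFun := show Continuous fun b => (f (0, b)).2 by fun_prop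
  continuous_invFun := show Continuous fun b => (f.symm (0, b)).2 by fun_prop

@[simp]
theorem prodSndAut_apply (b : B) : prodSndAut f b = (f (0, b)).2 := rfl

end

def prodAutEquiv [DiscreteTopology A] [IsTopologicalAddGroup B] [PreconnectedSpace B] :
    (A × B ≃ₜ+ A × B) ≃ (A ≃+ A) × (A →+ B) × (B ≃ₜ+ B) where
  toFun f := (prodFstAut f, prodMixedHom f, prodSndAut f)
  invFun t := prodTriangular t.1 t.2.1 t.2.2
  left_inv f := by
    ext x : 1
    conv_rhs => rw [← Prod.fst_add_snd x, map_add]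
    ext
    · simp [fst_apply_zero_mk]
    · simp
  right_inv t := by
    obtain ⟨α, φ, h⟩ := t
    refine Prod.ext ?_ (Prod.ext ?_ ?_)
    · ext a; simp
    · ext a; simp
    · ext b; simp

end ContinuousAddEquiv

/-- Let `A` be a finite abelian group with the discrete topology and `T = ℝ/ℤ` the
circle group. The group of topological automorphisms of the compact abelian group
`C = A × T` (continuous group automorphisms with continuous inverse) is finite of
cardinality `2 * |Aut A| * |A|`. -/
theorem card_topological_automorphisms_of_finite_times_circle
    (A : Type*) [AddCommGroup A] [Finite A] [TopologicalSpace A] [DiscreteTopology A] :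
    Finite {f : (A × AddCircle (1 : ℝ)) ≃+ (A × AddCircle (1 : ℝ)) //
        Continuous f ∧ Continuous f.symm} ∧
    Nat.card {f : (A × AddCircle (1 : ℝ)) ≃+ (A × AddCircle (1 : ℝ)) //
        Continuous f ∧ Continuous f.symm}
      = 2 * Nat.card (A ≃+ A) * Nat.card A := by
  have hcard : Nat.card {f : (A × AddCircle (1 : ℝ)) ≃+ (A × AddCircle (1 : ℝ)) //
      Continuous f ∧ Continuous f.symm} = 2 * Nat.card (A ≃+ A) * Nat.card A := by
    rw [← Nat.card_congr (ContinuousAddEquiv.equivSubtypeAddEquiv _ _),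
      Nat.card_congr ContinuousAddEquiv.prodAutEquiv, Nat.card_prod, Nat.card_prod,
      AddCircle.card_addMonoidHom A one_ne_zero, AddCircle.card_continuousAddEquiv]
    ring
  refine ⟨Nat.finite_of_card_ne_zero ?_, hcard⟩
  have hAut : 0 < Nat.card (A ≃+ A) := Nat.card_pos
  have hA : 0 < Nat.card A := Nat.card_pos
  rw [hcard]
  positivity
end

section
/- Let B be an abelian group and σ : B → B a group automorphism with σ² = id. Let N ⊆ B be a σ-stable subgroup such that σ(n) = −n for all n ∈ N, and suppose the quotient M = B/N is finite of odd order and that σ induces the identity map on M. Then the quotient map π : B → M admits a σ-equivariant group-theoretic section: there is a group homomorphism s : M → B with π ∘ s = id_M and σ ∘ s = s. -/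
/-- Let `B` be an abelian group and `σ : B → B` a group automorphism with `σ² = id`.
Let `N ⊆ B` be a `σ`-stable subgroup on which `σ` acts by `-1`, and suppose the quotient
`M = B ⧸ N` is finite of odd order and that `σ` induces the identity on `M`. Then the
quotient map `π : B → M` admits a `σ`-equivariant group-theoretic section. -/
theorem exists_equivariant_section_of_odd_quotient
    {B : Type*} [AddCommGroup B] (σ : B ≃+ B)
    (hσ2 : ∀ b : B, σ (σ b) = b)
    (N : AddSubgroup B)
    (hstable : ∀ n ∈ N, σ n ∈ N)
    (hneg : ∀ n ∈ N, σ n = -n)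
    (hfin : Finite (B ⧸ N))
    (hodd : Odd (Nat.card (B ⧸ N)))
    (hid : ∀ x : B, (QuotientAddGroup.mk (σ x) : B ⧸ N) = QuotientAddGroup.mk x) :
    ∃ s : (B ⧸ N) →+ B,
      (∀ m : B ⧸ N, (QuotientAddGroup.mk (s m) : B ⧸ N) = m) ∧
      (∀ m : B ⧸ N, σ (s m) = s m) := by
  set n := Nat.card (B ⧸ N) with hn
  obtain ⟨k, hk⟩ := hodd
  -- the subgroup of σ-fixed, n-torsion elements
  let A : AddSubgroup B :=
  { carrier := {b | σ b = b ∧ n • b = 0}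
    zero_mem' := ⟨map_zero σ, smul_zero n⟩
    add_mem' := fun {a b} ha hb =>
      ⟨by rw [map_add, ha.1, hb.1], by rw [smul_add, ha.2, hb.2, add_zero]⟩
    neg_mem' := fun {a} ha =>
      ⟨by rw [map_neg, ha.1], by rw [smul_neg, ha.2, neg_zero]⟩ }
  let f : A →+ B ⧸ N := (QuotientAddGroup.mk' N).comp A.subtype
  have hf : ∀ a : A, f a = QuotientAddGroup.mk (a : B) := fun a => rfl
  have hinj : Function.Injective f := by
    rw [injective_iff_map_eq_zero]
    rintro ⟨b, hb1, hb2⟩ hfb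
    have hbN : b ∈ N := by
      simpa [f, QuotientAddGroup.eq_zero_iff] using hfb
    have h2 : b + b = 0 := by
      have h := hneg b hbN
      rw [hb1] at h
      simpa using (congrArg (fun z => b + z) h.symm).symm
    have hb0 : b = 0 := by
      have : n • b = k • (b + b) + b := by
        rw [hk]; rw [add_smul, one_smul, two_mul, add_smul, ← smul_add]
      rw [hb2, h2, smul_zero, zero_add] at this
      exact this.symm
    exact Subtype.ext hb0
  have hsurj : Function.Surjective f := by
    intro m
    have hnm : n • m = 0 := card_nsmul_eq_zero'
    obtain ⟨x, hx⟩ := QuotientAddGroup.mk'_surjective N ((k + 1) • m)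
    set y := x + σ x with hy
    have hyfix : σ y = y := by rw [hy, map_add, hσ2, add_comm]
    have hpy : (QuotientAddGroup.mk y : B ⧸ N) = m := by
      have : (QuotientAddGroup.mk y : B ⧸ N) = (2 * (k + 1)) • m := by
        rw [hy]
        show (QuotientAddGroup.mk' N) (x + σ x) = _
        rw [map_add]
        have h1 : (QuotientAddGroup.mk' N) x = (k+1) • m := hx
        have h2 : (QuotientAddGroup.mk' N) (σ x) = (k+1) • m := by
          show (QuotientAddGroup.mk (σ x) : B ⧸ N) = _
          rw [hid x]; exact hx
        rw [h1, h2, ← add_smul]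
        congr 1
        ring
      rw [this]
      have : (2 * (k + 1)) • m = (n + 1) • m := by
        rw [hk]; ring_nf
      rw [this, add_smul, hnm, one_smul, zero_add]
    set c := n • y with hc
    have hcN : c ∈ N := by
      have : (QuotientAddGroup.mk c : B ⧸ N) = 0 := by
        have : (QuotientAddGroup.mk c : B ⧸ N) = n • (QuotientAddGroup.mk y : B ⧸ N) := by
          rw [hc]; simp
        rw [this, hpy, hnm]
      exact (QuotientAddGroup.eq_zero_iff c).mp this
    have hcfix : σ c = c := by rw [hc, map_nsmul, hyfix]
    have hc2 : c + c = 0 := by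
      have h := hneg c hcN
      rw [hcfix] at h
      simpa using (congrArg (fun z => c + z) h.symm).symm
    have hnc : n • c = c := by
      have : n • c = k • (c + c) + c := by
        rw [hk, add_smul, one_smul, two_mul, add_smul, ← smul_add]
      rw [hc2, smul_zero, zero_add] at this
      exact this
    refine ⟨⟨y + c, ?_, ?_⟩, ?_⟩
    · rw [map_add, hyfix, hcfix]
    · rw [smul_add, ← hc, hnc, hc2]
    · show (QuotientAddGroup.mk (y + c) : B ⧸ N) = m
      have : (QuotientAddGroup.mk (y + c) : B ⧸ N) =
          (QuotientAddGroup.mk y : B ⧸ N) + QuotientAddGroup.mk c := rfl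
      rw [this, hpy, (QuotientAddGroup.eq_zero_iff c).mpr hcN, add_zero]
  let e := AddEquiv.ofBijective f ⟨hinj, hsurj⟩
  refine ⟨A.subtype.comp e.symm.toAddMonoidHom, fun m => ?_, fun m => ?_⟩
  · exact e.apply_symm_apply m
  · exact (e.symm m).2.1
end

section
/- Let ℓ be a prime, A an abelian group, and C a finite abelian ℓ-group. Write C[ℓ] = {c ∈ C : ℓ·c = 0}, write A/ℓA for the quotient of A by the subgroup of ℓ-th multiples, and let q : A → A/ℓA be the quotient map. Then for every group homomorphism f : C[ℓ] → A/ℓA there exists a short exact sequence of abelian groups 0 → A →ⁱ B →ᵖ C → 0 such that for every c ∈ C with ℓ·c = 0 and every b ∈ B with p(b) = c, the element ℓ·b lies in i(A) and, writing ℓ·b = i(a), one has q(a) = f(c). In other words, the connecting homomorphism δ_ℓ : C[ℓ] → A/ℓA obtained by applying Hom(ℤ/ℓℤ, −) to the extension equals f; in particular the map Ext¹(C, A) → Hom(C[ℓ], A/ℓA), Θ ↦ δ_ℓ(Θ), is surjective. -/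
/-- The subgroup `C[ℓ] = {c ∈ C : ℓ·c = 0}` of an abelian group `C`. -/
def ellTorsion (ℓ : ℕ) (C : Type*) [AddCommGroup C] : AddSubgroup C where
  carrier := {c | ℓ • c = 0}
  zero_mem' := by simp
  add_mem' := by
    intro a b ha hb
    simp only [Set.mem_setOf_eq, smul_add] at *
    rw [ha, hb, add_zero]
  neg_mem' := by
    intro a ha
    simp only [Set.mem_setOf_eq, smul_neg] at *
    rw [ha, neg_zero]

/-- The subgroup `ℓA` of `ℓ`-th multiples of an abelian group `A`. -/
def ellMultiples (ℓ : ℕ) (A : Type*) [AddCommGroup A] : AddSubgroup A :=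
  (ℓ • AddMonoidHom.id A).range

/-!
Write `C ≅ ∏ ℤ/nᵢ`, giving a presentation `0 → ℤ^ι →μ ℤ^ι →π C → 0` with `μ = diag(nᵢ)`, and take
for `B` the pushout of `μ` along some `φ : ℤ^ι → A`. If `c = π x` lies in `C[ℓ]` then `ℓx = μ g`
for a unique `g`, and the connecting map sends `c` to `φ g mod ℓA`. As `C` is an `ℓ`-group,
`ℓ ∣ nᵢ`, so `μ = ℓ • s` with `s = diag(nᵢ/ℓ)`; then `x = s g`, so `σ : g ↦ π (s g)` is a
homomorphism `ℤ^ι → C[ℓ]` recovering `c` from `g`. Lifting `f ∘ σ` along `A → A/ℓA`, possible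
because `ℤ^ι` is free, gives the required `φ`.
-/

section Pushout

variable {A F G : Type*} [AddCommGroup A] [AddCommGroup F] [AddCommGroup G]
  (φ : G →+ A) (μ : G →+ F)

def pushoutRel : AddSubgroup (A × F) := (φ.prod (-μ)).range

def pushoutInl : A →+ (A × F) ⧸ pushoutRel φ μ :=
  (QuotientAddGroup.mk' _).comp (AddMonoidHom.inl A F)

theorem pushoutInl_add (a : A) (g : G) :
    pushoutInl φ μ (a + φ g) = QuotientAddGroup.mk (a, μ g) := by
  refine QuotientAddGroup.eq.mpr ⟨-g, ?_⟩
  ext <;> simp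

theorem pushoutInl_injective (hμ : Function.Injective μ) :
    Function.Injective (pushoutInl φ μ) := by
  refine (injective_iff_map_eq_zero _).mpr fun a ha => ?_
  obtain ⟨g, hg⟩ := (QuotientAddGroup.eq_zero_iff _).mp ha
  have hg0 : g = 0 := hμ (by simpa using congrArg Prod.snd hg)
  simpa [hg0] using (congrArg Prod.fst hg).symm

variable {C : Type*} [AddCommGroup C] (π : F →+ C)

def pushoutLift (h : μ.range ≤ π.ker) : (A × F) ⧸ pushoutRel φ μ →+ C :=
  QuotientAddGroup.lift _ (π.comp (AddMonoidHom.snd A F)) <| by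
    rintro _ ⟨g, rfl⟩
    simpa using h ⟨g, rfl⟩

theorem pushoutLift_surjective (h : μ.range ≤ π.ker) (hπ : Function.Surjective π) :
    Function.Surjective (pushoutLift φ μ π h) := fun c =>
  let ⟨x, hx⟩ := hπ c
  ⟨QuotientAddGroup.mk (0, x), hx⟩

theorem pushoutLift_eq_zero_iff (hexact : π.ker = μ.range) (b : (A × F) ⧸ pushoutRel φ μ) :
    pushoutLift φ μ π hexact.ge b = 0 ↔ b ∈ (pushoutInl φ μ).range := by
  induction b using QuotientAddGroup.induction_on with | H x => ?_
  obtain ⟨a, x⟩ := x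
  constructor
  · intro hx
    obtain ⟨g, rfl⟩ : x ∈ μ.range := hexact ▸ hx
    exact ⟨a + φ g, pushoutInl_add φ μ a g⟩
  · rintro ⟨a', ha'⟩
    rw [← ha']
    exact map_zero π

end Pushout

theorem mk_nsmul_ellMultiples {A : Type*} [AddCommGroup A] (ℓ : ℕ) (a : A) :
    (QuotientAddGroup.mk (ℓ • a) : A ⧸ ellMultiples ℓ A) = 0 :=
  (QuotientAddGroup.eq_zero_iff _).mpr ⟨a, rfl⟩

theorem exists_addMonoidHom_lift {G Q A : Type*} [AddCommGroup G] [AddCommGroup Q]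
    [AddCommGroup A] [Module.Projective ℤ G] (q : A →+ Q) (hq : Function.Surjective q)
    (h : G →+ Q) : ∃ φ : G →+ A, q.comp φ = h := by
  obtain ⟨φ, hφ⟩ := Module.projective_lifting_property q.toIntLinearMap h.toIntLinearMap hq
  exact ⟨φ.toAddMonoidHom, congrArg LinearMap.toAddMonoidHom hφ⟩

def IsConnectingMapOfExtension {ℓ : ℕ} {A C : Type} [AddCommGroup A] [AddCommGroup C]
    (f : ellTorsion ℓ C →+ A ⧸ ellMultiples ℓ A) : Prop :=
  ∃ (B : Type) (_ : AddCommGroup B) (i : A →+ B) (p : B →+ C),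
    Function.Injective i ∧ Function.Surjective p ∧
    (∀ b : B, p b = 0 ↔ b ∈ i.range) ∧
    ∀ (c : C) (hc : ℓ • c = 0) (b : B), p b = c →
      ∃ a : A, i a = ℓ • b ∧
        (QuotientAddGroup.mk a : A ⧸ ellMultiples ℓ A) = f ⟨c, hc⟩

theorem isConnectingMapOfExtension_of_presentation {ℓ : ℕ} (hℓ : ℓ ≠ 0) {A C F : Type} {G : Type*}
    [AddCommGroup A] [AddCommGroup C] [AddCommGroup F] [IsAddTorsionFree F] [AddCommGroup G]
    [Module.Projective ℤ G] (μ s : G →+ F) (π : F →+ C) (hμ : Function.Injective μ)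
    (hπ : Function.Surjective π) (hexact : π.ker = μ.range) (hs : ℓ • s = μ)
    (f : ellTorsion ℓ C →+ A ⧸ ellMultiples ℓ A) :
    IsConnectingMapOfExtension f := by
  have hsμ (g : G) : ℓ • s g = μ g := by rw [← hs, AddMonoidHom.nsmul_apply]
  let σ : G →+ ellTorsion ℓ C := (π.comp s).codRestrict _ fun g => by
    change ℓ • π (s g) = 0
    rw [← map_nsmul, hsμ, ← AddMonoidHom.mem_ker, hexact]
    exact ⟨g, rfl⟩
  obtain ⟨φ, hφ⟩ := exists_addMonoidHom_lift _ (QuotientAddGroup.mk'_surjective _) (f.comp σ)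
  refine ⟨_, inferInstance, pushoutInl φ μ, pushoutLift φ μ π hexact.ge,
    pushoutInl_injective φ μ hμ, pushoutLift_surjective φ μ π _ hπ,
    pushoutLift_eq_zero_iff φ μ π hexact, ?_⟩
  rintro c hc b rfl
  obtain ⟨⟨a, x⟩, rfl⟩ := QuotientAddGroup.mk_surjective b
  obtain ⟨g, hg⟩ : ℓ • x ∈ μ.range := by
    rw [← hexact, AddMonoidHom.mem_ker, map_nsmul]
    exact hc
  have hx : x = s g := nsmul_right_injective hℓ (hg.symm.trans (hsμ g).symm)
  refine ⟨ℓ • a + φ g, by rw [pushoutInl_add, hg]; rfl, ?_⟩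
  have hσ : σ g = ⟨π x, hc⟩ := by subst hx; rfl
  calc (QuotientAddGroup.mk (ℓ • a + φ g) : A ⧸ ellMultiples ℓ A)
      = QuotientAddGroup.mk (φ g) := by
        rw [QuotientAddGroup.mk_add, mk_nsmul_ellMultiples, zero_add]
    _ = f (σ g) := DFunLike.congr_fun hφ g
    _ = f ⟨π x, hc⟩ := by rw [hσ]

section DiagonalPresentation

variable {ι : Type*} (n : ι → ℕ)

def piZModCast : (ι → ℤ) →+ ∀ i, ZMod (n i) :=
  AddMonoidHom.piMap fun i => Int.castAddHom (ZMod (n i))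

theorem piZModCast_surjective : Function.Surjective (piZModCast n) := fun c => by
  choose v hv using fun i => ZMod.intCast_surjective (c i)
  exact ⟨v, funext hv⟩

theorem ker_piZModCast :
    (piZModCast n).ker = (AddMonoidHom.mulLeft fun i => (n i : ℤ)).range := by
  ext v
  simp only [AddMonoidHom.mem_ker, AddMonoidHom.mem_range, AddMonoidHom.coe_mulLeft, funext_iff,
    piZModCast, AddMonoidHom.piMap_apply, Int.coe_castAddHom, Pi.zero_apply, Pi.mul_apply,
    ZMod.intCast_zmod_eq_zero_iff_dvd, dvd_def, eq_comm (b := v _)]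
  exact Classical.skolem

theorem mulLeft_natCast_injective (hn : ∀ i, n i ≠ 0) :
    Function.Injective (AddMonoidHom.mulLeft fun i => (n i : ℤ)) := fun v w h =>
  funext fun i => mul_left_cancel₀ (show (n i : ℤ) ≠ 0 by exact_mod_cast hn i) (congrFun h i)

end DiagonalPresentation

theorem exists_addEquiv_pi_zmod_of_card_eq_prime_pow {ℓ : ℕ} (hℓ : ℓ.Prime) {C : Type*}
    [AddCommGroup C] [Finite C] (hC : ∃ N : ℕ, Nat.card C = ℓ ^ N) :
    ∃ (ι : Type) (_ : Fintype ι) (n : ι → ℕ),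
      (∀ i, n i ≠ 0 ∧ ℓ ∣ n i) ∧ Nonempty (C ≃+ ∀ i, ZMod (n i)) := by
  obtain ⟨N, hN⟩ := hC
  obtain ⟨ι, _, n, hn, ⟨E⟩⟩ := AddCommGroup.equiv_directSum_zmod_of_finite' C
  let E' := E.trans (DirectSum.addEquivProd _)
  refine ⟨ι, inferInstance, n, fun i => ?_, ⟨E'⟩⟩
  have hcard : ∏ i, n i = ℓ ^ N := by
    simp only [← hN, Nat.card_congr E'.toEquiv, Nat.card_pi, Nat.card_zmod]
  obtain ⟨k, -, hk⟩ :=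
    (Nat.dvd_prime_pow hℓ).mp (hcard ▸ Finset.dvd_prod_of_mem n (Finset.mem_univ i))
  have hk0 : k ≠ 0 := by
    rintro rfl
    exact (hn i).ne' (by simpa using hk)
  exact ⟨(Nat.zero_lt_of_lt (hn i)).ne', hk ▸ dvd_pow_self ℓ hk0⟩

/-- Let `ℓ` be a prime, `A` an abelian group and `C` a finite abelian `ℓ`-group. For
every homomorphism `f : C[ℓ] → A/ℓA` there is a short exact sequence
`0 → A → B → C → 0` whose connecting homomorphism `δ_ℓ : C[ℓ] → A/ℓA` (obtained by
applying `Hom(ℤ/ℓℤ, -)`) equals `f`; i.e. `Ext¹(C, A) → Hom(C[ℓ], A/ℓA)` is surjective. -/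
theorem connecting_map_surjective (ℓ : ℕ) (hℓ : ℓ.Prime)
    (A : Type) [AddCommGroup A]
    (C : Type) [AddCommGroup C] [Finite C] (hC : ∃ n : ℕ, Nat.card C = ℓ ^ n)
    (f : ellTorsion ℓ C →+ A ⧸ ellMultiples ℓ A) :
    ∃ (B : Type) (_ : AddCommGroup B) (i : A →+ B) (p : B →+ C),
      Function.Injective i ∧ Function.Surjective p ∧
      (∀ b : B, p b = 0 ↔ b ∈ i.range) ∧
      ∀ (c : C) (hc : ℓ • c = 0) (b : B), p b = c →
        ∃ a : A, i a = ℓ • b ∧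
          (QuotientAddGroup.mk a : A ⧸ ellMultiples ℓ A) = f ⟨c, hc⟩ := by
  obtain ⟨ι, _, n, hn, ⟨E⟩⟩ := exists_addEquiv_pi_zmod_of_card_eq_prime_pow hℓ hC
  choose m hm using fun i => (hn i).2
  refine isConnectingMapOfExtension_of_presentation hℓ.ne_zero
    (AddMonoidHom.mulLeft fun i => (n i : ℤ)) (AddMonoidHom.mulLeft fun i => (m i : ℤ))
    ((E.symm : _ →+ C).comp (piZModCast n))
    (mulLeft_natCast_injective n fun i => (hn i).1)
    (E.symm.surjective.comp (piZModCast_surjective n))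
    (by rw [AddMonoidHom.ker_addEquiv_comp, ker_piZModCast]) ?_ f
  ext v i
  simp [hm, mul_assoc]
end

section
/- Let ℓ be a prime and let V and W be finite-dimensional vector spaces over the field 𝔽_ℓ with ℓ elements. Then |V| · ∑_{δ ∈ Hom_{𝔽_ℓ}(V, W)} |W| / |image(δ)| = |Hom_{𝔽_ℓ}(V, W)| · (|V| + |W| − 1), where the sum runs over all 𝔽_ℓ-linear maps δ : V → W and |X| denotes cardinality. Equivalently, the average over δ ∈ Hom(V, W) of |W|/|im δ| equals 1 + (|W| − 1)/|V|. -/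
open Module LinearMap Finset

private lemma card_of_zmod_module (ℓ : ℕ) [Fact ℓ.Prime] (M : Type*) [AddCommGroup M]
    [Module (ZMod ℓ) M] [Finite M] : Nat.card M = ℓ ^ Module.finrank (ZMod ℓ) M := by
  haveI : NeZero ℓ := ⟨(Fact.out : ℓ.Prime).pos.ne'⟩
  have := Fintype.ofFinite M
  rw [Nat.card_eq_fintype_card, card_eq_pow_finrank (K := ZMod ℓ), ZMod.card]

/-- Let `ℓ` be a prime and `V`, `W` finite-dimensional `𝔽_ℓ`-vector spaces. Then
`|V| · ∑_{δ ∈ Hom(V,W)} |W| / |im δ| = |Hom(V,W)| · (|V| + |W| - 1)`, i.e. the average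
over `δ` of `|W|/|im δ|` equals `1 + (|W| - 1)/|V|`. -/
theorem sum_card_coker_linear_maps (ℓ : ℕ) [Fact ℓ.Prime]
    (V W : Type*) [AddCommGroup V] [Module (ZMod ℓ) V] [Finite V]
    [AddCommGroup W] [Module (ZMod ℓ) W] [Finite W] :
    Nat.card V * (∑ᶠ δ : V →ₗ[ZMod ℓ] W, Nat.card W / Nat.card (LinearMap.range δ))
      = Nat.card (V →ₗ[ZMod ℓ] W) * (Nat.card V + Nat.card W - 1) := by
  classical
  haveI : NeZero ℓ := ⟨(Fact.out : ℓ.Prime).pos.ne'⟩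
  haveI : Finite (V →ₗ[ZMod ℓ] W) :=
    Finite.of_injective _ (DFunLike.coe_injective (F := V →ₗ[ZMod ℓ] W))
  haveI : Finite (W →ₗ[ZMod ℓ] ZMod ℓ) :=
    Finite.of_injective _ (DFunLike.coe_injective (F := W →ₗ[ZMod ℓ] ZMod ℓ))
  have := Fintype.ofFinite (V →ₗ[ZMod ℓ] W)
  have := Fintype.ofFinite (W →ₗ[ZMod ℓ] ZMod ℓ)
  set n := finrank (ZMod ℓ) V with hn
  set m := finrank (ZMod ℓ) W with hm
  have hℓ : 1 ≤ ℓ := (Fact.out : ℓ.Prime).pos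
  -- step 1: each term equals the number of characters annihilating the range
  have key : ∀ δ : V →ₗ[ZMod ℓ] W, Nat.card W / Nat.card (LinearMap.range δ)
      = (univ.filter (fun χ : W →ₗ[ZMod ℓ] ZMod ℓ => χ ∘ₗ δ = 0)).card := by
    intro δ
    have e1 : {χ : W →ₗ[ZMod ℓ] ZMod ℓ // χ ∘ₗ δ = 0} ≃ (LinearMap.range δ).dualAnnihilator := by
      refine Equiv.subtypeEquivRight fun χ => ?_
      rw [Submodule.mem_dualAnnihilator]
      constructor
      · rintro h w ⟨v, rfl⟩
        exact congrFun (congrArg DFunLike.coe h) v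
      · intro h; ext v; exact h (δ v) ⟨v, rfl⟩
    have hr : finrank (ZMod ℓ) (LinearMap.range δ) ≤ m := Submodule.finrank_le _
    have hq : finrank (ZMod ℓ) ((LinearMap.range δ).dualAnnihilator)
        = m - finrank (ZMod ℓ) (LinearMap.range δ) := by
      have h1 : finrank (ZMod ℓ) (W ⧸ LinearMap.range δ)
          = finrank (ZMod ℓ) ((LinearMap.range δ).dualAnnihilator) :=
        (Subspace.quotEquivAnnihilator (LinearMap.range δ)).finrank_eq
      have h2 := Submodule.finrank_quotient_add_finrank (LinearMap.range δ)
      omega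
    have h3 : (univ.filter (fun χ : W →ₗ[ZMod ℓ] ZMod ℓ => χ ∘ₗ δ = 0)).card
        = Nat.card ((LinearMap.range δ).dualAnnihilator) := by
      rw [← Fintype.card_subtype, ← Nat.card_eq_fintype_card, Nat.card_congr e1]
    rw [h3, card_of_zmod_module ℓ, card_of_zmod_module ℓ, card_of_zmod_module ℓ, hq, Nat.pow_div hr (by omega)]
  -- rewrite the finsum as a Finset sum and swap the order of summation
  rw [finsum_eq_sum_of_fintype]
  simp_rw [key]
  have swap : ∑ δ : V →ₗ[ZMod ℓ] W,
        (univ.filter (fun χ : W →ₗ[ZMod ℓ] ZMod ℓ => χ ∘ₗ δ = 0)).card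
      = ∑ χ : W →ₗ[ZMod ℓ] ZMod ℓ,
        (univ.filter (fun δ : V →ₗ[ZMod ℓ] W => χ ∘ₗ δ = 0)).card := by
    simp_rw [Finset.card_filter]
    rw [Finset.sum_comm]
  rw [swap]
  -- count, for each χ, the δ's with χ ∘ δ = 0
  have key2 : ∀ χ : W →ₗ[ZMod ℓ] ZMod ℓ,
      (univ.filter (fun δ : V →ₗ[ZMod ℓ] W => χ ∘ₗ δ = 0)).card
      = ℓ ^ (n * finrank (ZMod ℓ) (LinearMap.ker χ)) := by
    intro χ
    have e2 : (V →ₗ[ZMod ℓ] (LinearMap.ker χ)) ≃ {δ : V →ₗ[ZMod ℓ] W // χ ∘ₗ δ = 0} := by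
      refine ⟨fun f => ⟨(LinearMap.ker χ).subtype ∘ₗ f, ?_⟩,
        fun δ => LinearMap.codRestrict _ δ.1 fun v => ?_, fun f => ?_, fun δ => ?_⟩
      · ext v; exact (f v).2
      · exact congrFun (congrArg DFunLike.coe δ.2) v
      · ext v; rfl
      · ext v; rfl
    haveI : Finite (V →ₗ[ZMod ℓ] (LinearMap.ker χ)) :=
      Finite.of_injective _ (DFunLike.coe_injective (F := V →ₗ[ZMod ℓ] (LinearMap.ker χ)))
    rw [← Fintype.card_subtype, ← Nat.card_eq_fintype_card, ← Nat.card_congr e2, card_of_zmod_module ℓ,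
      Module.finrank_linearMap]
  simp_rw [key2]
  -- finrank of the kernel of a character
  have hker : ∀ χ : W →ₗ[ZMod ℓ] ZMod ℓ, χ ≠ 0 →
      finrank (ZMod ℓ) (LinearMap.ker χ) = m - 1 := by
    intro χ hχ
    have h1 := LinearMap.finrank_range_add_finrank_ker χ
    have h2 : LinearMap.range χ = ⊤ := by
      obtain ⟨x, hx⟩ : ∃ x, χ x ≠ 0 := by
        by_contra h; push_neg at h; exact hχ (LinearMap.ext h)
      rw [eq_top_iff]
      rintro c -
      exact ⟨(c * (χ x)⁻¹) • x, by
        rw [map_smul, smul_eq_mul, mul_assoc, inv_mul_cancel₀ hx, mul_one]⟩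
    rw [h2, finrank_top, finrank_self] at h1
    omega
  have hzero : finrank (ZMod ℓ) (LinearMap.ker (0 : W →ₗ[ZMod ℓ] ZMod ℓ)) = m := by
    rw [LinearMap.ker_zero, finrank_top]
  -- split the sum over χ into the zero character and the rest
  have hsplit : ∑ χ : W →ₗ[ZMod ℓ] ZMod ℓ, ℓ ^ (n * finrank (ZMod ℓ) (LinearMap.ker χ))
      = ℓ ^ (n * m) + (ℓ ^ m - 1) * ℓ ^ (n * (m - 1)) := by
    rw [← Finset.add_sum_erase _ _ (Finset.mem_univ (0 : W →ₗ[ZMod ℓ] ZMod ℓ)), hzero]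
    congr 1
    rw [Finset.sum_congr rfl (fun χ hχ => by
      rw [hker χ (Finset.ne_of_mem_erase hχ)]), Finset.sum_const, smul_eq_mul]
    congr 1
    rw [Finset.card_erase_of_mem (Finset.mem_univ _), Finset.card_univ,
      ← Nat.card_eq_fintype_card, card_of_zmod_module ℓ, Module.finrank_linearMap, finrank_self, mul_one]
  rw [hsplit, card_of_zmod_module ℓ V, card_of_zmod_module ℓ W, card_of_zmod_module ℓ (V →ₗ[ZMod ℓ] W), Module.finrank_linearMap, ← hn, ← hm]
  -- final arithmetic
  rcases Nat.eq_zero_or_pos m with h | hm1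
  · simp [h]
  · have h1 : (1:ℕ) ≤ ℓ ^ m := Nat.one_le_pow _ _ (by omega)
    have h2 : (1:ℕ) ≤ ℓ ^ n + ℓ ^ m := by omega
    have hnm : n * m = n * (m - 1) + n := by
      conv_lhs => rw [← Nat.succ_pred_eq_of_pos hm1]
      rw [Nat.mul_succ]; rfl
    zify [h1, h2]
    rw [hnm, pow_add]
    ring
end
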